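/- arXiv:2602.02642 — 6 statements merged into one kernel-verified Lean document; each statement's English description precedes it below -/
import Mathlib

section
/- (Loop lemma.) Let M be an n×n integer matrix and σ a permutation of {1,…,n}. Suppose (M, σ) admits a loop, i.e. there exist k ≥ 1, pairwise distinct column indices i₁, …, i_k ∈ {1,…,n}, and row indices j₁, …, j_k ∈ {1,…,n} such that for every 1 ≤ r ≤ k: j_r ≠ σ(i_r) and M(j_r, i_r) = M(σ(i_r), i_r); moreover j_r = σ(i_{r+1}) for 1 ≤ r ≤ k−1 and j_k = σ(i₁). Then there exists a permutation τ of {1,…,n} with τ ≠ σ such that M(τ(c), c) = M(σ(c), c) for every column c; in particular ∑_{c=1}^n M(τ(c), c) = ∑_{c=1}^n M(σ(c), c). -/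
/-- Loop lemma: if `(M, σ)` admits a loop — pairwise distinct columns `i₁, …, i_k`
(`k ≥ 1`) with row indices `j₁, …, j_k` such that `j_r ≠ σ(i_r)`,
`M (j_r) (i_r) = M (σ (i_r)) (i_r)`, and the cyclic condition `j_r = σ (i_{r+1})`
(indices mod `k`) — then there is a permutation `τ ≠ σ` whose diagonal entries agree
with those of `σ` in every column; in particular the diagonal sums agree. -/
theorem loop_lemma (n : ℕ) [NeZero n] (M : Matrix (Fin n) (Fin n) ℤ)
    (σ : Equiv.Perm (Fin n)) (k : ℕ) (hk : 1 ≤ k)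
    (i : Fin k → Fin n) (hi : Function.Injective i) (j : Fin k → Fin n)
    (hne : ∀ r : Fin k, j r ≠ σ (i r))
    (heq : ∀ r : Fin k, M (j r) (i r) = M (σ (i r)) (i r))
    (hloop : ∀ r : Fin k, j r = σ (i ⟨((r : ℕ) + 1) % k, Nat.mod_lt _ hk⟩)) :
    ∃ τ : Equiv.Perm (Fin n), τ ≠ σ ∧ (∀ c : Fin n, M (τ c) c = M (σ c) c) ∧
      ∑ c : Fin n, M (τ c) c = ∑ c : Fin n, M (σ c) c := by
  set l : List (Fin n) := List.ofFn i with hl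
  have hnd : l.Nodup := (List.nodup_ofFn).mpr hi
  have hlen : l.length = k := List.length_ofFn (f := i)
  -- key: τ applied to i r equals j r
  set τ : Equiv.Perm (Fin n) := σ * l.formPerm with hτ
  have key : ∀ r : Fin k, τ (i r) = j r := by
    intro r
    have h1 : i r = l[(r : ℕ)]'(by omega) := by simp [hl]
    have h2 : l.formPerm (i r) = i ⟨((r : ℕ) + 1) % k, Nat.mod_lt _ hk⟩ := by
      rw [h1, List.formPerm_apply_getElem l hnd _ (by omega)]
      simp [hl, hlen]
    simp [hτ, Equiv.Perm.mul_apply, h2, ← hloop r]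
  have hfix : ∀ c : Fin n, c ∉ l → τ c = σ c := by
    intro c hc
    simp [hτ, Equiv.Perm.mul_apply, List.formPerm_apply_getElem,
      List.formPerm_apply_of_notMem hc]
  have hdiag : ∀ c : Fin n, M (τ c) c = M (σ c) c := by
    intro c
    by_cases hc : c ∈ l
    · obtain ⟨m, hm, hmc⟩ := List.getElem_of_mem hc
      have : c = i ⟨m, by omega⟩ := by simp [← hmc, hl]
      rw [this, key, heq]
    · rw [hfix c hc]
  refine ⟨τ, ?_, hdiag, by simp [hdiag]⟩
  intro h
  have r0 : Fin k := ⟨0, hk⟩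
  have := key r0
  rw [h] at this
  exact hne r0 this.symm
end

section
/- (Correctness of the new-perfect-grid-state algorithm.) Let σ be a permutation of {1,…,n} and let J : {1,…,n} → {1,…,n} be any function satisfying J(i) ≠ σ(i) for all i. Then there exists a permutation τ of {1,…,n} with τ ≠ σ such that for every index i, either τ(i) = σ(i) or τ(i) = J(i). -/
/-- Correctness of the new-perfect-grid-state algorithm: given a permutation `σ` of
`{1,…,n}` and any function `J` with `J i ≠ σ i` for all `i`, there exists a
permutation `τ ≠ σ` such that at every index `i`, `τ i` equals `σ i` or `J i`. -/
theorem new_perfect_grid_state (n : ℕ) [NeZero n] (σ : Equiv.Perm (Fin n))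
    (J : Fin n → Fin n) (hJ : ∀ i, J i ≠ σ i) :
    ∃ τ : Equiv.Perm (Fin n), τ ≠ σ ∧ ∀ i, τ i = σ i ∨ τ i = J i := by
  set f : Fin n → Fin n := fun i => σ.symm (J i) with hf_def
  have hf : ∀ i, f i ≠ i := fun i h => hJ i (by
    have := congrArg σ h
    simpa [hf_def] using this)
  -- find a periodic point of f
  obtain ⟨a, b, hab, heq⟩ : ∃ a b : ℕ, a < b ∧ f^[a] 0 = f^[b] 0 := by
    obtain ⟨a, b, hne, heq⟩ := Finite.exists_ne_map_eq_of_infinite (fun k : ℕ => f^[k] (0 : Fin n))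
    rcases hne.lt_or_gt with h | h
    · exact ⟨a, b, h, heq⟩
    · exact ⟨b, a, h, heq.symm⟩
  set x : Fin n := f^[a] 0 with hx_def
  have hper : Function.IsPeriodicPt f (b - a) x := by
    unfold Function.IsPeriodicPt Function.IsFixedPt
    rw [hx_def, ← Function.iterate_add_apply, Nat.sub_add_cancel hab.le, ← heq]
  have hmem : x ∈ Function.periodicPts f := ⟨b - a, Nat.sub_pos_of_lt hab, hper⟩
  set m : ℕ := Function.minimalPeriod f x with hm_def
  have hm0 : 0 < m := Function.minimalPeriod_pos_of_mem_periodicPts hmem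
  -- the cycle list
  set L : List (Fin n) := (List.range m).map (fun k => f^[k] x) with hL_def
  have hlen : L.length = m := by simp [hL_def]
  have hnodup : L.Nodup := by
    refine List.Nodup.map_on ?_ List.nodup_range
    intro i hi j hj hij
    exact Function.iterate_injOn_Iio_minimalPeriod
      (by simpa using List.mem_range.mp hi) (by simpa using List.mem_range.mp hj) hij
  have hxL : x ∈ L := by
    rw [hL_def]
    exact List.mem_map.mpr ⟨0, List.mem_range.mpr hm0, rfl⟩
  -- formPerm acts as f on L
  have hform : ∀ y ∈ L, L.formPerm y = f y := by
    intro y hy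
    obtain ⟨i, hi, rfl⟩ := List.mem_map.mp hy
    have hi' : i < m := List.mem_range.mp hi
    have hiL : i < L.length := by rwa [hlen]
    have h1 : L[i]'hiL = f^[i] x := by simp [hL_def]
    have h2 : L[(i+1) % L.length]'(Nat.mod_lt _ (Nat.zero_lt_of_lt hiL)) = f^[(i+1) % m] x := by
      simp [hL_def, hlen]
    calc L.formPerm (f^[i] x) = L.formPerm (L[i]'hiL) := by rw [h1]
      _ = L[(i+1) % L.length]'(Nat.mod_lt _ (Nat.zero_lt_of_lt hiL)) :=
          List.formPerm_apply_getElem L hnodup i hiL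
      _ = f^[(i+1) % m] x := h2
      _ = f^[i+1] x := Function.iterate_mod_minimalPeriod_eq
      _ = f (f^[i] x) := Function.iterate_succ_apply' f i x
  refine ⟨σ * L.formPerm, ?_, ?_⟩
  · intro h
    have : (σ * L.formPerm) x = σ x := by rw [h]
    have hx' : σ (f x) = σ x := by
      simpa [Equiv.Perm.mul_apply, hform x hxL] using this
    exact hf x (σ.injective hx')
  · intro i
    by_cases hi : i ∈ L
    · right
      simp [Equiv.Perm.mul_apply, hform i hi, hf_def]
    · left
      simp [Equiv.Perm.mul_apply, List.formPerm_apply_of_notMem hi]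
end

section
/- Let M be an n×n integer matrix (with n ≥ 1) such that there is exactly one column-perfect permutation for M (i.e. there exists a column-perfect permutation and any two column-perfect permutations are equal). Then some column of M has a unique minimal entry: there exist a column j and a row i such that M(i, j) < M(i', j) for every row i' ≠ i. -/
/-- If an `n × n` integer matrix `M` has exactly one column-perfect permutation, then
some column of `M` has a unique minimal entry. -/
theorem unique_column_perfect_implies_unique_col_min (n : ℕ) [NeZero n]
    (M : Matrix (Fin n) (Fin n) ℤ)
    (huniq : ∃! σ : Equiv.Perm (Fin n),
      ∑ j : Fin n, M (σ j) j
        = ∑ j : Fin n, Finset.univ.inf' Finset.univ_nonempty (fun i => M i j)) :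
    ∃ (j i : Fin n), ∀ i' : Fin n, i' ≠ i → M i j < M i' j := by
  classical
  by_contra h
  push_neg at h
  obtain ⟨σ, hσ, hσu⟩ := huniq
  -- each entry picked by σ is a column min
  have hle : ∀ j ∈ Finset.univ,
      Finset.univ.inf' Finset.univ_nonempty (fun i => M i j) ≤ M (σ j) j :=
    fun j _ => Finset.inf'_le _ (Finset.mem_univ _)
  have hmin : ∀ j, M (σ j) j
      = Finset.univ.inf' Finset.univ_nonempty (fun i => M i j) := by
    have := (Finset.sum_eq_sum_iff_of_le hle).mp hσ.symm
    exact fun j => (this j (Finset.mem_univ j)).symm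
  -- alternative min rows
  have ha : ∀ j : Fin n, ∃ i', i' ≠ σ j ∧
      M i' j = Finset.univ.inf' Finset.univ_nonempty (fun i => M i j) := by
    intro j
    obtain ⟨i', hne, hle'⟩ := h j (σ j)
    exact ⟨i', hne, le_antisymm (by rw [← hmin j]; exact hle')
      (Finset.inf'_le _ (Finset.mem_univ _))⟩
  choose a hane hamin using ha
  set f : Fin n → Fin n := fun j => σ.symm (a j) with hf
  have hfne : ∀ j, f j ≠ j := by
    intro j hj
    apply hane j
    have := congrArg σ hj
    simpa [hf] using this
  -- find a cycle of f
  obtain ⟨k, l, hkl, heq⟩ :=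
    Finite.exists_ne_map_eq_of_infinite (fun m : ℕ => f^[m] (0 : Fin n))
  wlog hlt : k < l generalizing k l
  · exact this l k hkl.symm heq.symm (by omega)
  set p := l - k with hp
  have hp1 : 1 ≤ p := by omega
  set x := f^[k] (0 : Fin n) with hx
  have hcyc : f^[p] x = x := by
    rw [hx, ← Function.iterate_add_apply]
    have hpk : p + k = l := by omega
    rw [hpk]
    exact heq.symm
  set C : Set (Fin n) := Set.range (fun i : ℕ => f^[i] x) with hC
  have hxC : x ∈ C := ⟨0, rfl⟩
  set g : Fin n → Fin n := fun c => if c ∈ C then f c else c with hg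
  have hgsurj : Function.Surjective g := by
    intro y
    by_cases hy : y ∈ C
    · obtain ⟨i, hi⟩ := hy
      rcases Nat.eq_zero_or_pos i with hi0 | hipos
      · refine ⟨f^[p-1] x, ?_⟩
        have hmem : f^[p-1] x ∈ C := ⟨p-1, rfl⟩
        simp only [hg, if_pos hmem]
        have h2 : f (f^[p-1] x) = f^[p-1+1] x := (Function.iterate_succ_apply' f (p-1) x).symm
        have h1 : p - 1 + 1 = p := by omega
        rw [h2, h1, hcyc]
        rw [hi0] at hi; simpa using hi
      · refine ⟨f^[i-1] x, ?_⟩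
        have hmem : f^[i-1] x ∈ C := ⟨i-1, rfl⟩
        simp only [hg, if_pos hmem]
        have h2 : f (f^[i-1] x) = f^[i-1+1] x := (Function.iterate_succ_apply' f (i-1) x).symm
        have h1 : i - 1 + 1 = i := by omega
        rw [h2, h1]; exact hi
    · exact ⟨y, by simp [hg, hy]⟩
  have hgbij : Function.Bijective g := Finite.surjective_iff_bijective.mp hgsurj
  let G : Equiv.Perm (Fin n) := Equiv.ofBijective g hgbij
  have hG : ∀ c, G c = g c := fun c => rfl
  have hperf : ∑ j : Fin n, M ((G.trans σ) j) j
      = ∑ j : Fin n, Finset.univ.inf' Finset.univ_nonempty (fun i => M i j) := by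
    apply Finset.sum_congr rfl
    intro j _
    simp only [Equiv.trans_apply, hG]
    by_cases hj : j ∈ C
    · simp only [hg, if_pos hj, hf, Equiv.apply_symm_apply]
      exact hamin j
    · simp only [hg, if_neg hj]
      exact hmin j
  have heqσ := hσu _ hperf
  have hx' := congrArg (fun τ : Equiv.Perm (Fin n) => τ x) heqσ
  simp only [Equiv.trans_apply, hG] at hx'
  rw [hg] at hx'
  simp only [if_pos hxC] at hx'
  exact hfne x (σ.injective hx')
end

section
/- Let M be an n×n integer matrix (with n ≥ 1) such that there is exactly one row-perfect permutation for M (i.e. there exists a row-perfect permutation and any two row-perfect permutations are equal). Then some row of M has a unique minimal entry: there exist a row i and a column j such that M(i, j) < M(i, j') for every column j' ≠ j. -/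
/-- If an `n × n` integer matrix `M` has exactly one row-perfect permutation, then
some row of `M` has a unique minimal entry. -/
theorem unique_row_perfect_implies_unique_row_min (n : ℕ) [NeZero n]
    (M : Matrix (Fin n) (Fin n) ℤ)
    (huniq : ∃! σ : Equiv.Perm (Fin n),
      ∑ j : Fin n, M (σ j) j
        = ∑ i : Fin n, Finset.univ.inf' Finset.univ_nonempty (fun j => M i j)) :
    ∃ (i j : Fin n), ∀ j' : Fin n, j' ≠ j → M i j < M i j' := by
  classical
  by_contra hcon
  push_neg at hcon
  obtain ⟨σ, hσ, huniq⟩ := huniq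
  set mn : Fin n → ℤ := fun i => Finset.univ.inf' Finset.univ_nonempty (fun j => M i j)
    with hmn
  have hsum : ∑ j : Fin n, M (σ j) j = ∑ j : Fin n, mn (σ j) := by
    rw [hσ]; exact (Equiv.sum_comp σ mn).symm
  have hterm : ∀ j : Fin n, M (σ j) j = mn (σ j) := by
    have hle : ∀ j ∈ Finset.univ, mn (σ j) ≤ M (σ j) j := fun j _ =>
      Finset.inf'_le _ (Finset.mem_univ j)
    have h := (Finset.sum_eq_sum_iff_of_le hle).mp hsum.symm
    exact fun j => (h j (Finset.mem_univ j)).symm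
  -- every row has a second minimal column
  have hf : ∀ i : Fin n, ∃ j', j' ≠ σ.symm i ∧ M i j' = mn i := by
    intro i
    obtain ⟨j', hne, hle⟩ := hcon i (σ.symm i)
    refine ⟨j', hne, le_antisymm ?_ (Finset.inf'_le _ (Finset.mem_univ j'))⟩
    have h := hterm (σ.symm i)
    rw [Equiv.apply_symm_apply] at h
    exact hle.trans_eq h
  choose f hf1 hf2 using hf
  set g : Fin n → Fin n := fun j => f (σ j) with hg
  have hgne : ∀ j, g j ≠ j := by
    intro j h
    have h1 := hf1 (σ j)
    rw [Equiv.symm_apply_apply] at h1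
    exact h1 (by simpa [hg] using h)
  have hgmin : ∀ j, M (σ j) (g j) = mn (σ j) := fun j => hf2 (σ j)
  -- find a periodic point of g
  have hex : ∃ (x : Fin n) (m : ℕ), 0 < m ∧ g^[m] x = x := by
    obtain ⟨a, b, hab, heq⟩ := Finite.exists_ne_map_eq_of_infinite
      (fun t : ℕ => g^[t] (0 : Fin n))
    rcases hab.lt_or_gt with hlt | hlt
    · refine ⟨g^[a] (0 : Fin n), b - a, by omega, ?_⟩
      rw [← Function.iterate_add_apply]
      have : b - a + a = b := by omega
      rw [this]; exact heq.symm
    · refine ⟨g^[b] (0 : Fin n), a - b, by omega, ?_⟩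
      rw [← Function.iterate_add_apply]
      have : a - b + b = a := by omega
      rw [this]; exact heq
  obtain ⟨x, m, hm0, hxm⟩ := hex
  have hper : ∀ t, g^[t + m] x = g^[t] x := by
    intro t
    rw [Function.iterate_add_apply, hxm]
  have hkey : ∀ s t : ℕ, g^[s + 1] x = g^[t + 1] x → g^[s] x = g^[t] x := by
    intro s t h
    have hs : g^[s] x = g^[m - 1] (g^[s + 1] x) := by
      rw [← Function.iterate_add_apply]
      have e : m - 1 + (s + 1) = s + m := by omega
      rw [e, hper]
    have ht : g^[t] x = g^[m - 1] (g^[t + 1] x) := by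
      rw [← Function.iterate_add_apply]
      have e : m - 1 + (t + 1) = t + m := by omega
      rw [e, hper]
    rw [hs, ht, h]
  set ρ : Fin n → Fin n := fun j => if ∃ t, g^[t] x = j then g j else j with hρ
  have hρ_in : ∀ y, (∃ t, g^[t] x = y) → ρ y = g y := by
    intro y h; simp only [hρ]; rw [if_pos h]
  have hρ_out : ∀ y, ¬(∃ t, g^[t] x = y) → ρ y = y := by
    intro y h; simp only [hρ]; rw [if_neg h]
  have hinO : ∀ j, (∃ t, g^[t] x = j) → ∃ t, g^[t] x = g j := by
    rintro j ⟨t, rfl⟩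
    exact ⟨t + 1, by rw [Function.iterate_succ_apply']⟩
  have hρinj : Function.Injective ρ := by
    intro y1 y2 h
    by_cases h1 : ∃ t, g^[t] x = y1 <;> by_cases h2 : ∃ t, g^[t] x = y2
    · rw [hρ_in y1 h1, hρ_in y2 h2] at h
      obtain ⟨s, rfl⟩ := h1
      obtain ⟨t, rfl⟩ := h2
      exact hkey s t (by
        rw [Function.iterate_succ_apply', Function.iterate_succ_apply']
        exact h)
    · exfalso
      rw [hρ_in y1 h1, hρ_out y2 h2] at h
      exact h2 (h ▸ hinO y1 h1)
    · exfalso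
      rw [hρ_out y1 h1, hρ_in y2 h2] at h
      exact h1 (h ▸ (hinO y2 h2))
    · rwa [hρ_out y1 h1, hρ_out y2 h2] at h
  set ρe : Equiv.Perm (Fin n) := Equiv.ofBijective ρ
    (Finite.injective_iff_bijective.mp hρinj) with hρe
  have hρe_apply : ∀ k, ρe k = ρ k := fun k => rfl
  set τ : Equiv.Perm (Fin n) := σ * ρe⁻¹ with hτ
  have hτterm : ∀ j : Fin n, M (τ j) j = mn (τ j) := by
    intro j
    have hjk : ρe (ρe⁻¹ j) = j := Equiv.apply_symm_apply ρe j
    set k : Fin n := ρe⁻¹ j with hk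
    have hτj : τ j = σ k := rfl
    rw [hτj]
    by_cases hkO : ∃ t, g^[t] x = k
    · have hj : j = g k := by rw [← hjk, hρe_apply, hρ_in k hkO]
      rw [hj]
      exact hgmin k
    · have hj : j = k := by rw [← hjk, hρe_apply, hρ_out k hkO]
      rw [hj]
      exact hterm k
  have hτsum : ∑ j : Fin n, M (τ j) j = ∑ i : Fin n, mn i := by
    calc ∑ j : Fin n, M (τ j) j = ∑ j : Fin n, mn (τ j) :=
          Finset.sum_congr rfl (fun j _ => hτterm j)
      _ = ∑ i : Fin n, mn i := Equiv.sum_comp τ mn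
  have hτσ : τ = σ := huniq τ hτsum
  have hρe1 : ρe = 1 := by
    have h1 : σ * ρe⁻¹ = σ * 1 := by rw [mul_one, ← hτ, hτσ]
    have h2 := mul_left_cancel h1
    rwa [inv_eq_one] at h2
  have hfix : ρe x = x := by rw [hρe1]; rfl
  rw [hρe_apply, hρ_in x ⟨0, rfl⟩] at hfix
  exact hgne x hfix
end

section
/- Let M be an n×n integer matrix (with n ≥ 1) in which every column has at least two entries achieving the column minimum: for every column j there exist rows i₁ ≠ i₂ with M(i₁, j) = colmin(j) and M(i₂, j) = colmin(j). Then for every column-perfect permutation σ there exists another column-perfect permutation τ with τ ≠ σ; in particular, M does not admit a unique column-perfect permutation. -/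
/-- If every column of `M` has at least two entries achieving the column minimum, then
every column-perfect permutation `σ` admits a different column-perfect permutation `τ`;
in particular, `M` does not admit a unique column-perfect permutation. -/
theorem no_unique_column_perfect_of_doubled_col_minima (n : ℕ) [NeZero n]
    (M : Matrix (Fin n) (Fin n) ℤ)
    (hdouble : ∀ j : Fin n, ∃ i₁ i₂ : Fin n, i₁ ≠ i₂ ∧
      M i₁ j = Finset.univ.inf' Finset.univ_nonempty (fun i => M i j) ∧
      M i₂ j = Finset.univ.inf' Finset.univ_nonempty (fun i => M i j)) :
    (∀ σ : Equiv.Perm (Fin n),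
      (∑ j : Fin n, M (σ j) j
          = ∑ j : Fin n, Finset.univ.inf' Finset.univ_nonempty (fun i => M i j)) →
      ∃ τ : Equiv.Perm (Fin n), τ ≠ σ ∧
        ∑ j : Fin n, M (τ j) j
          = ∑ j : Fin n, Finset.univ.inf' Finset.univ_nonempty (fun i => M i j)) ∧
    ¬ ∃! σ : Equiv.Perm (Fin n),
      ∑ j : Fin n, M (σ j) j
        = ∑ j : Fin n, Finset.univ.inf' Finset.univ_nonempty (fun i => M i j) := by
  classical
  set m : Fin n → ℤ := fun j => Finset.univ.inf' Finset.univ_nonempty (fun i => M i j) with hm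
  have main : ∀ σ : Equiv.Perm (Fin n),
      (∑ j : Fin n, M (σ j) j = ∑ j : Fin n, m j) →
      ∃ τ : Equiv.Perm (Fin n), τ ≠ σ ∧ ∑ j : Fin n, M (τ j) j = ∑ j : Fin n, m j := by
    intro σ hσ
    have hle : ∀ j ∈ (Finset.univ : Finset (Fin n)), m j ≤ M (σ j) j := by
      intro j _
      exact Finset.inf'_le _ (Finset.mem_univ (σ j))
    have hall : ∀ j : Fin n, M (σ j) j = m j := by
      intro j
      exact ((Finset.sum_eq_sum_iff_of_le hle).mp hσ.symm j (Finset.mem_univ j)).symm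
    -- choose a second minimizer in each column
    have hf : ∀ j : Fin n, ∃ i, i ≠ σ j ∧ M i j = m j := by
      intro j
      obtain ⟨i₁, i₂, h12, h1, h2⟩ := hdouble j
      by_cases h : i₁ = σ j
      · exact ⟨i₂, by rw [← h]; exact Ne.symm h12, h2⟩
      · exact ⟨i₁, h, h1⟩
    choose f hfne hfmin using hf
    set h : Fin n → Fin n := fun j => σ.symm (f j) with hh
    have hhne : ∀ j, h j ≠ j := by
      intro j hj
      apply hfne j
      have : σ (σ.symm (f j)) = σ j := congrArg σ hj
      simpa using this
    -- find a periodic point of h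
    have hnon : Nonempty (Fin n) := ⟨⟨0, Nat.pos_of_ne_zero (NeZero.ne n)⟩⟩
    obtain ⟨j0⟩ := hnon
    obtain ⟨a, b, hab, heq⟩ :=
      Finite.exists_ne_map_eq_of_infinite (fun t : ℕ => h^[t] j0)
    obtain ⟨a, b, hlt, heq⟩ : ∃ a b : ℕ, a < b ∧ h^[a] j0 = h^[b] j0 := by
      rcases lt_or_gt_of_ne hab with hl | hl
      · exact ⟨a, b, hl, heq⟩
      · exact ⟨b, a, hl, heq.symm⟩
    set x : Fin n := h^[a] j0 with hx
    set p : ℕ := b - a with hp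
    have hp0 : 0 < p := Nat.sub_pos_of_lt hlt
    have hper : h^[p] x = x := by
      rw [hx, ← Function.iterate_add_apply, hp]
      rw [Nat.sub_add_cancel hlt.le]
      exact heq.symm
    set S : Set (Fin n) := Set.range (fun t : ℕ => h^[t] x) with hS
    have hmemS : ∀ y ∈ S, h y ∈ S := by
      rintro y ⟨t, rfl⟩
      exact ⟨t + 1, Function.iterate_succ_apply' h t x⟩
    have hsurjS : ∀ y ∈ S, ∃ z ∈ S, h z = y := by
      rintro y ⟨t, rfl⟩
      refine ⟨h^[t + p - 1] x, ⟨t + p - 1, rfl⟩, ?_⟩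
      have : h^[(t + p - 1) + 1] x = h^[t + p] x := by
        congr 1
        omega
      rw [← Function.iterate_succ_apply' h (t + p - 1) x] at *
      rw [this, Function.iterate_add_apply, hper]
    have hxS : x ∈ S := ⟨0, rfl⟩
    -- restrict h to a permutation of S
    set H : S → S := fun y => ⟨h y.1, hmemS y.1 y.2⟩ with hH
    have Hsurj : Function.Surjective H := by
      rintro ⟨y, hy⟩
      obtain ⟨z, hz, hzy⟩ := hsurjS y hy
      exact ⟨⟨z, hz⟩, Subtype.ext hzy⟩
    have Hbij : Function.Bijective H := Function.Surjective.bijective_of_finite Hsurj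
    set e : Equiv.Perm S := Equiv.ofBijective H Hbij with he
    set c : Equiv.Perm (Fin n) := e.extendDomain (Equiv.refl S) with hc
    have hcS : ∀ y (hy : y ∈ S), c y = h y := by
      intro y hy
      rw [hc, Equiv.Perm.extendDomain_apply_subtype e (Equiv.refl S) hy]
      rfl
    have hcnS : ∀ y, y ∉ S → c y = y := by
      intro y hy
      rw [hc, Equiv.Perm.extendDomain_apply_not_subtype e (Equiv.refl S) hy]
    refine ⟨σ * c, ?_, ?_⟩
    · intro hcontra
      have h1 : (σ * c) x = σ x := by rw [hcontra]
      rw [Equiv.Perm.mul_apply, hcS x hxS] at h1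
      exact hhne x (σ.injective h1)
    · apply Finset.sum_congr rfl
      intro j _
      rw [Equiv.Perm.mul_apply]
      by_cases hjS : j ∈ S
      · rw [hcS j hjS, hh]
        simpa using hfmin j
      · rw [hcnS j hjS]
        exact hall j
  refine ⟨main, ?_⟩
  rintro ⟨σ, hσ, huniq⟩
  obtain ⟨τ, hτne, hτ⟩ := main σ hσ
  exact hτne (huniq τ hτ)
end

section
/- Let M be an n×n integer matrix (with n ≥ 1) in which every row has at least two entries achieving the row minimum: for every row i there exist columns j₁ ≠ j₂ with M(i, j₁) = rowmin(i) and M(i, j₂) = rowmin(i). Then for every row-perfect permutation σ there exists another row-perfect permutation τ with τ ≠ σ; in particular, M does not admit a unique row-perfect permutation. -/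
/-- If every row of `M` has at least two entries achieving the row minimum, then every
row-perfect permutation `σ` admits a different row-perfect permutation `τ`; in
particular, `M` does not admit a unique row-perfect permutation. -/
theorem no_unique_row_perfect_of_doubled_row_minima (n : ℕ) [NeZero n]
    (M : Matrix (Fin n) (Fin n) ℤ)
    (hdouble : ∀ i : Fin n, ∃ j₁ j₂ : Fin n, j₁ ≠ j₂ ∧
      M i j₁ = Finset.univ.inf' Finset.univ_nonempty (fun j => M i j) ∧
      M i j₂ = Finset.univ.inf' Finset.univ_nonempty (fun j => M i j)) :
    (∀ σ : Equiv.Perm (Fin n),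
      (∑ j : Fin n, M (σ j) j
          = ∑ i : Fin n, Finset.univ.inf' Finset.univ_nonempty (fun j => M i j)) →
      ∃ τ : Equiv.Perm (Fin n), τ ≠ σ ∧
        ∑ j : Fin n, M (τ j) j
          = ∑ i : Fin n, Finset.univ.inf' Finset.univ_nonempty (fun j => M i j)) ∧
    ¬ ∃! σ : Equiv.Perm (Fin n),
      ∑ j : Fin n, M (σ j) j
        = ∑ i : Fin n, Finset.univ.inf' Finset.univ_nonempty (fun j => M i j) := by
  classical
  set rm : Fin n → ℤ := fun i => Finset.univ.inf' Finset.univ_nonempty (fun j => M i j)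
    with hrm
  have key : ∀ σ : Equiv.Perm (Fin n),
      (∑ j : Fin n, M (σ j) j = ∑ i : Fin n, rm i) →
      ∃ τ : Equiv.Perm (Fin n), τ ≠ σ ∧ ∑ j : Fin n, M (τ j) j = ∑ i : Fin n, rm i := by
    intro σ hσ
    have hsum' : ∑ j : Fin n, rm (σ j) = ∑ i : Fin n, rm i := Equiv.sum_comp σ rm
    have hle : ∀ j : Fin n, rm (σ j) ≤ M (σ j) j := fun j =>
      Finset.inf'_le _ (Finset.mem_univ j)
    have hterm : ∀ j : Fin n, rm (σ j) = M (σ j) j := by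
      have h := (Finset.sum_eq_sum_iff_of_le (fun j _ => hle j)).mp
        (by rw [hsum', hσ])
      intro j; exact h j (Finset.mem_univ j)
    -- choose an alternative minimal column for each column
    have hc : ∀ j : Fin n, ∃ j' : Fin n, j' ≠ j ∧ M (σ j) j' = rm (σ j) := by
      intro j
      obtain ⟨j₁, j₂, hne, h1, h2⟩ := hdouble (σ j)
      by_cases h : j₁ = j
      · exact ⟨j₂, by simpa [h] using hne.symm, h2⟩
      · exact ⟨j₁, h, h1⟩
    choose c hcne hcmin using hc
    -- find a periodic point of c
    obtain ⟨k, -, l, -, hkl, heq⟩ :=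
      Finset.exists_ne_map_eq_of_card_lt_of_maps_to
        (s := Finset.range (n+1)) (t := (Finset.univ : Finset (Fin n)))
        (by simp) (fun k _ => Finset.mem_univ (c^[k] (0 : Fin n)))
    wlog hlt : k < l generalizing k l
    · exact this l k hkl.symm heq.symm (by omega)
    set y : Fin n := c^[k] (0 : Fin n) with hy
    set p : ℕ := l - k with hp
    have hp1 : 1 ≤ p := by omega
    have hcy : c^[p] y = y := by
      have : c^[p] (c^[k] (0 : Fin n)) = c^[p + k] (0 : Fin n) :=
        (Function.iterate_add_apply c p k 0).symm
      rw [hy, this]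
      have : p + k = l := by omega
      rw [this, ← heq]
    set S : Set (Fin n) := Set.range (fun t : ℕ => c^[t] y) with hS
    have hmem : ∀ x, x ∈ S → c x ∈ S := by
      rintro x ⟨t, rfl⟩
      exact ⟨t + 1, Function.iterate_succ_apply' c t y⟩
    have hyS : y ∈ S := ⟨0, rfl⟩
    let f : S → S := fun x => ⟨c x.1, hmem x.1 x.2⟩
    have hfsurj : Function.Surjective f := by
      rintro ⟨x, t, rfl⟩
      refine ⟨⟨c^[t + (p - 1)] y, ⟨t + (p - 1), rfl⟩⟩, ?_⟩
      apply Subtype.ext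
      show c (c^[t + (p-1)] y) = c^[t] y
      rw [← Function.iterate_succ_apply' c (t + (p-1)) y]
      have h1 : (t + (p - 1)).succ = t + p := by omega
      rw [h1, Function.iterate_add_apply, hcy]
    have hfbij : Function.Bijective f :=
      ⟨Finite.injective_iff_surjective.mpr hfsurj, hfsurj⟩
    let e : Equiv.Perm S := Equiv.ofBijective f hfbij
    let π : Equiv.Perm (Fin n) := Equiv.Perm.ofSubtype e
    have hπ_mem : ∀ x (hx : x ∈ S), π x = c x := by
      intro x hx
      have : π x = (e ⟨x, hx⟩ : Fin n) := Equiv.Perm.ofSubtype_apply_of_mem e hx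
      rw [this]; rfl
    have hπ_not : ∀ x, x ∉ S → π x = x := fun x hx =>
      Equiv.Perm.ofSubtype_apply_of_not_mem e hx
    refine ⟨σ * π⁻¹, ?_, ?_⟩
    · intro hτ
      have h1 : (σ * π⁻¹) (π y) = σ y := by
        simp [Equiv.Perm.mul_apply]
      rw [hτ] at h1
      have h2 : π y = y := σ.injective h1
      rw [hπ_mem y hyS] at h2
      exact hcne y h2
    · have hstep : ∑ j : Fin n, M ((σ * π⁻¹) j) j
          = ∑ j : Fin n, M ((σ * π⁻¹) (π j)) (π j) :=
        (Equiv.sum_comp π (fun j => M ((σ * π⁻¹) j) j)).symm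
      rw [hstep]
      have hterm' : ∀ j : Fin n, M ((σ * π⁻¹) (π j)) (π j) = rm (σ j) := by
        intro j
        have hred : (σ * π⁻¹) (π j) = σ j := by simp [Equiv.Perm.mul_apply]
        rw [hred]
        by_cases hj : j ∈ S
        · rw [hπ_mem j hj]; exact hcmin j
        · rw [hπ_not j hj]; exact (hterm j).symm
      calc ∑ j : Fin n, M ((σ * π⁻¹) (π j)) (π j)
          = ∑ j : Fin n, rm (σ j) := Finset.sum_congr rfl (fun j _ => hterm' j)
        _ = ∑ i : Fin n, rm i := hsum'
  refine ⟨key, ?_⟩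
  rintro ⟨σ, hσ, huniq⟩
  obtain ⟨τ, hτne, hτ⟩ := key σ hσ
  exact hτne (huniq τ hτ)
end
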